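/- With the setup of the deceptive quadratic game (costs J_i(x) = ½ xᵀ A_i x + b_iᵀ x + c_i with A_i symmetric; Gaussian measures μ_i on ℝ with density (1/(√π q_i)) e^{-z²/q_i²} and product μ = μ_1 × ⋯ × μ_N; odd measurable functions f_1,…,f_N bounded by F > 0 (|f_k(s)| ≤ F for all s, k); amplitudes a_1,…,a_N > 0; deceptive sets 𝒟, 𝒟_k; gains δ_k ∈ ℝ; η̄ : ℝ^N → ℝ^N defined by [η̄(z)]_k = a_k f_k(z_k) + δ_k Σ_{j∈𝒟_k} a_j f_j(z_j) for k ∈ 𝒟 and [η̄(z)]_k = a_k f_k(z_k) otherwise): there exists a constant C ≥ 0, depending only on N, F, the matrices A_i, and the gains δ, such that for every u ∈ ℝ^N and every i, |∫_{ℝ^N} J_i(u + η̄(z)) dμ(z) − J_i(u)| ≤ C · (max_{k} a_k)². In particular, the averaged perturbation term vanishes as the exploration amplitudes a_k tend to zero, uniformly in u. -/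
import Mathlib


open MeasureTheory Matrix Finset

/-- The Gaussian probability measure on ℝ with density `z ↦ (1/(√π q)) e^{-z²/q²}`. -/
noncomputable def gmeas (q : ℝ) : Measure ℝ :=
  volume.withDensity fun z =>
    ENNReal.ofReal ((Real.sqrt Real.pi * q)⁻¹ * Real.exp (-z ^ 2 / q ^ 2))

open scoped ENNReal NNReal

lemma gmeas_prob {q : ℝ} (hq : 0 < q) : IsProbabilityMeasure (gmeas q) := by
  constructor
  have hb : (0:ℝ) < 1 / q ^ 2 := by positivity
  have hInt : Integrable (fun z : ℝ =>
      (Real.sqrt Real.pi * q)⁻¹ * Real.exp (-z ^ 2 / q ^ 2)) := by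
    have : (fun z : ℝ => (Real.sqrt Real.pi * q)⁻¹ * Real.exp (-z ^ 2 / q ^ 2))
        = fun z : ℝ => (Real.sqrt Real.pi * q)⁻¹ * Real.exp (-(1 / q ^ 2) * z ^ 2) := by
      funext z; congr 1; congr 1; field_simp
    rw [this]
    exact (integrable_exp_neg_mul_sq hb).const_mul _
  have hnn : 0 ≤ᵐ[volume] fun z : ℝ =>
      (Real.sqrt Real.pi * q)⁻¹ * Real.exp (-z ^ 2 / q ^ 2) := by
    filter_upwards with z
    have : 0 < Real.sqrt Real.pi := Real.sqrt_pos.mpr Real.pi_pos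
    positivity
  rw [gmeas, withDensity_apply _ MeasurableSet.univ, Measure.restrict_univ,
    ← ofReal_integral_eq_lintegral_ofReal hInt hnn]
  have : ∫ z : ℝ, (Real.sqrt Real.pi * q)⁻¹ * Real.exp (-z ^ 2 / q ^ 2) = 1 := by
    have h1 : (fun z : ℝ => (Real.sqrt Real.pi * q)⁻¹ * Real.exp (-z ^ 2 / q ^ 2))
        = fun z : ℝ => (Real.sqrt Real.pi * q)⁻¹ * Real.exp (-(1 / q ^ 2) * z ^ 2) := by
      funext z; congr 1; congr 1; field_simp
    rw [h1, MeasureTheory.integral_const_mul, integral_gaussian]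
    have h2 : Real.pi / (1 / q ^ 2) = Real.pi * q ^ 2 := by field_simp
    rw [h2, Real.sqrt_mul Real.pi_pos.le, Real.sqrt_sq hq.le]
    have : Real.sqrt Real.pi * q ≠ 0 := by
      have : 0 < Real.sqrt Real.pi := Real.sqrt_pos.mpr Real.pi_pos
      positivity
    field_simp
  rw [this, ENNReal.ofReal_one]

lemma gmeas_odd_zero {q : ℝ} (hq : 0 < q) {g : ℝ → ℝ} (hg : Measurable g)
    (hodd : ∀ s, g (-s) = -g s) : ∫ t, g t ∂(gmeas q) = 0 := by
  set ρ : ℝ → ℝ := fun z => (Real.sqrt Real.pi * q)⁻¹ * Real.exp (-z ^ 2 / q ^ 2) with hρ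
  have hρnn : ∀ z, 0 ≤ ρ z := by
    intro z
    have : 0 < Real.sqrt Real.pi := Real.sqrt_pos.mpr Real.pi_pos
    positivity
  have hρmeas : Measurable fun z => (ρ z).toNNReal := by
    apply Measurable.real_toNNReal
    apply Measurable.const_mul
    exact (Real.measurable_exp.comp ((measurable_id.pow_const 2).neg.div_const _))
  have key : ∫ t, g t ∂(gmeas q) = ∫ z, ρ z * g z := by
    have : gmeas q = volume.withDensity fun z => ((ρ z).toNNReal : ℝ≥0∞) := rfl
    rw [this, integral_withDensity_eq_integral_smul hρmeas]
    congr 1; funext z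
    rw [NNReal.smul_def, Real.coe_toNNReal _ (hρnn z), smul_eq_mul]
  have hodd2 : ∀ z, ρ (-z) * g (-z) = -(ρ z * g z) := by
    intro z
    have : ρ (-z) = ρ z := by simp [hρ, neg_sq]
    rw [this, hodd]; ring
  have h3 : ∫ z, ρ z * g z = -∫ z, ρ z * g z := by
    conv_lhs => rw [← integral_neg_eq_self (fun z => ρ z * g z) volume]
    simp_rw [hodd2]
    rw [integral_neg]
  rw [key]; linarith

lemma pi_map_eval {N : ℕ} (μs : Fin N → Measure ℝ) [∀ i, IsProbabilityMeasure (μs i)]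
    (k : Fin N) : (Measure.pi μs).map (Function.eval k) = μs k := by
  ext s hs
  rw [Measure.map_apply (measurable_pi_apply k) hs]
  rw [Set.eval_preimage, Measure.pi_pi]
  rw [Finset.prod_eq_single k]
  · simp
  · intro j _ hj; simp [Function.update_of_ne hj]
  · simp

lemma integral_eval {N : ℕ} (μs : Fin N → Measure ℝ) [∀ i, IsProbabilityMeasure (μs i)]
    (k : Fin N) {g : ℝ → ℝ} (hg : Measurable g) :
    ∫ z : Fin N → ℝ, g (z k) ∂(Measure.pi μs) = ∫ t, g t ∂(μs k) := by
  rw [← pi_map_eval μs k,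
    integral_map (measurable_pi_apply k).aemeasurable hg.aestronglyMeasurable]

lemma integrable_of_bdd {α : Type*} [MeasurableSpace α] {μ : Measure α} [IsFiniteMeasure μ]
    {g : α → ℝ} (hg : Measurable g) {M : ℝ} (h : ∀ x, |g x| ≤ M) : Integrable g μ :=
  ⟨hg.aestronglyMeasurable, HasFiniteIntegral.of_bounded
    (ae_of_all μ (by simpa [Real.norm_eq_abs] using h))⟩

set_option maxHeartbeats 1000000 in
/-- In the deceptive quadratic game (costs
`J i x = ½ xᵀ (A i) x + (b i)ᵀ x + c i` with `A i` symmetric; product Gaussian measure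
`μ`; odd measurable functions `f k` uniformly bounded by `F > 0`; amplitudes `a k > 0`;
deceptive sets `𝒟`, `𝒟_k`; gains `δ k`; perturbation `η̄`), there is a constant
`C ≥ 0`, independent of `u` and of the amplitudes `a`, such that for every `u` and `i`,
`|∫ J_i(u + η̄(z)) dμ(z) − J_i(u)| ≤ C · (max_k a_k)²`. -/
theorem stmt10 (N : ℕ) (hN : 0 < N) (q : Fin N → ℝ) (hq : ∀ i, 0 < q i)
    (f : Fin N → ℝ → ℝ)
    (hmeas : ∀ i, Measurable (f i))
    (F : ℝ) (hF : 0 < F) (hbd : ∀ k s, |f k s| ≤ F)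
    (hodd : ∀ i s, f i (-s) = -f i s)
    (A : Fin N → Matrix (Fin N) (Fin N) ℝ) (hsymm : ∀ i, (A i).IsSymm)
    (b : Fin N → Fin N → ℝ) (c : Fin N → ℝ)
    (J : Fin N → (Fin N → ℝ) → ℝ)
    (hJ : ∀ i x, J i x = (1 / 2) * (x ⬝ᵥ (A i).mulVec x) + (b i) ⬝ᵥ x + c i)
    (𝒟 : Finset (Fin N)) (Dset : Fin N → Finset (Fin N))
    (hD : ∀ k ∈ 𝒟, k ∉ Dset k)
    (δ : Fin N → ℝ) :
    ∃ C : ℝ, 0 ≤ C ∧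
      ∀ (a : Fin N → ℝ), (∀ k, 0 < a k) →
        ∀ (etabar : (Fin N → ℝ) → Fin N → ℝ),
          (∀ z k, etabar z k =
            if k ∈ 𝒟 then a k * f k (z k) + δ k * ∑ j ∈ Dset k, a j * f j (z j)
            else a k * f k (z k)) →
          ∀ (u : Fin N → ℝ) (i : Fin N),
            |(∫ z : Fin N → ℝ, J i (u + etabar z)
                ∂(Measure.pi fun l => gmeas (q l))) - J i u| ≤
              C * (Finset.univ.sup'
                (Finset.univ_nonempty_iff.mpr ⟨⟨0, hN⟩⟩) a) ^ 2 := by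
  classical
  set Sδ := ∑ j, |δ j| with hSδ
  have hSδnn : 0 ≤ Sδ := Finset.sum_nonneg fun j _ => abs_nonneg _
  set B := F * (1 + Sδ * (N : ℝ)) with hB
  have hBpos : 0 < B := by
    have h1 : (0:ℝ) ≤ Sδ * N := mul_nonneg hSδnn (Nat.cast_nonneg N)
    rw [hB]; nlinarith
  set SA := ∑ i : Fin N, ∑ k, ∑ l, |A i k l| with hSA
  have hSAnn : 0 ≤ SA :=
    Finset.sum_nonneg fun _ _ => Finset.sum_nonneg fun _ _ =>
      Finset.sum_nonneg fun _ _ => abs_nonneg _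
  refine ⟨(1/2) * SA * B ^ 2, mul_nonneg (mul_nonneg (by norm_num) hSAnn) (sq_nonneg B), ?_⟩
  intro a ha etabar hetabar u i
  haveI : ∀ l, IsProbabilityMeasure (gmeas (q l)) := fun l => gmeas_prob (hq l)
  set μ := Measure.pi fun l => gmeas (q l) with hμ
  haveI : IsProbabilityMeasure μ := by rw [hμ]; infer_instance
  set amax := Finset.univ.sup' (Finset.univ_nonempty_iff.mpr ⟨⟨0, hN⟩⟩) a with hamax
  have hle : ∀ k, a k ≤ amax := fun k => Finset.le_sup' a (Finset.mem_univ k)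
  have hamax_pos : 0 < amax := lt_of_lt_of_le (ha ⟨0, hN⟩) (hle _)
  -- coordinate functions
  have hfmeas : ∀ j : Fin N, Measurable fun z : Fin N → ℝ => f j (z j) :=
    fun j => (hmeas j).comp (measurable_pi_apply j)
  have hfint : ∀ j, Integrable (fun z : Fin N → ℝ => f j (z j)) μ :=
    fun j => integrable_of_bdd (hfmeas j) (fun z => hbd j (z j))
  have hfzero : ∀ j, ∫ z, f j (z j) ∂μ = 0 := by
    intro j
    rw [hμ, integral_eval _ j (hmeas j)]
    exact gmeas_odd_zero (hq j) (hmeas j) (hodd j)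
  -- eta properties
  have hηmeas : ∀ k, Measurable fun z => etabar z k := by
    intro k
    have he : (fun z => etabar z k) = fun z =>
        (if k ∈ 𝒟 then a k * f k (z k) + δ k * ∑ j ∈ Dset k, a j * f j (z j)
         else a k * f k (z k)) := funext fun z => hetabar z k
    rw [he]
    by_cases hk : k ∈ 𝒟 <;> simp only [hk, if_true, if_false]
    · exact ((hfmeas k).const_mul _).add
        ((Finset.measurable_sum _ fun j _ => (hfmeas j).const_mul _).const_mul _)
    · exact (hfmeas k).const_mul _
  have habs : ∀ j (s : ℝ), |a j * f j s| ≤ amax * F := by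
    intro j s
    rw [abs_mul, abs_of_pos (ha j)]
    exact mul_le_mul (hle j) (hbd j s) (abs_nonneg _) hamax_pos.le
  have hηbd : ∀ z k, |etabar z k| ≤ B * amax := by
    intro z k
    rw [hetabar]
    by_cases hk : k ∈ 𝒟 <;> simp only [hk, if_true, if_false]
    · have hδk : |δ k| ≤ Sδ :=
        Finset.single_le_sum (f := fun j => |δ j|) (fun j _ => abs_nonneg _) (Finset.mem_univ k)
      have hsum : |∑ j ∈ Dset k, a j * f j (z j)| ≤ (N : ℝ) * (amax * F) := by
        refine (Finset.abs_sum_le_sum_abs _ _).trans ?_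
        calc ∑ j ∈ Dset k, |a j * f j (z j)| ≤ ∑ _j ∈ Dset k, amax * F :=
              Finset.sum_le_sum fun j _ => habs j _
          _ = (Dset k).card * (amax * F) := by rw [Finset.sum_const, nsmul_eq_mul]
          _ ≤ (N : ℝ) * (amax * F) := by
              have hcard : ((Dset k).card : ℝ) ≤ (N : ℝ) := by
                exact_mod_cast (Finset.card_le_univ (Dset k)).trans_eq (by simp)
              have : (0:ℝ) ≤ amax * F := by positivity
              exact mul_le_mul_of_nonneg_right hcard this
      calc |a k * f k (z k) + δ k * ∑ j ∈ Dset k, a j * f j (z j)|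
          ≤ |a k * f k (z k)| + |δ k| * |∑ j ∈ Dset k, a j * f j (z j)| := by
            rw [← abs_mul]; exact abs_add_le _ _
        _ ≤ amax * F + Sδ * ((N : ℝ) * (amax * F)) := by
            refine add_le_add (habs k _) ?_
            exact mul_le_mul hδk hsum (abs_nonneg _) hSδnn
        _ = B * amax := by rw [hB]; ring
    · calc |a k * f k (z k)| ≤ amax * F := habs k _
        _ ≤ B * amax := by
            rw [hB]
            nlinarith [mul_nonneg (mul_nonneg hF.le (mul_nonneg hSδnn
              (Nat.cast_nonneg (α := ℝ) N))) hamax_pos.le]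
  have hηint : ∀ k, Integrable (fun z => etabar z k) μ :=
    fun k => integrable_of_bdd (hηmeas k) (fun z => hηbd z k)
  have hηzero : ∀ k, ∫ z, etabar z k ∂μ = 0 := by
    intro k
    have he : (fun z => etabar z k) = fun z =>
        (if k ∈ 𝒟 then a k * f k (z k) + δ k * ∑ j ∈ Dset k, a j * f j (z j)
         else a k * f k (z k)) := funext fun z => hetabar z k
    rw [he]
    by_cases hk : k ∈ 𝒟 <;> simp only [hk, if_true, if_false]
    · rw [integral_add ((hfint k).const_mul _)
        ((integrable_finset_sum _ fun j _ => (hfint j).const_mul _).const_mul _),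
        MeasureTheory.integral_const_mul, hfzero k, MeasureTheory.integral_const_mul,
        integral_finset_sum _ (fun j _ => (hfint j).const_mul _)]
      simp [MeasureTheory.integral_const_mul, hfzero]
    · rw [MeasureTheory.integral_const_mul, hfzero k, mul_zero]
  -- decomposition of the cost
  set cvec : Fin N → ℝ := fun k =>
    (1/2) * Matrix.vecMul u (A i) k + (1/2) * (A i).mulVec u k + b i k with hcvec
  have expand : ∀ η : Fin N → ℝ, J i (u + η)
      = J i u + cvec ⬝ᵥ η + (1/2) * (η ⬝ᵥ (A i).mulVec η) := by
    intro η
    have hc : cvec ⬝ᵥ η = (1/2) * (Matrix.vecMul u (A i) ⬝ᵥ η)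
        + (1/2) * ((A i).mulVec u ⬝ᵥ η) + b i ⬝ᵥ η := by
      simp only [hcvec, dotProduct, add_mul, Finset.sum_add_distrib, Finset.mul_sum, mul_assoc]
    rw [hJ, hJ, Matrix.mulVec_add, dotProduct_add, add_dotProduct, add_dotProduct,
      Matrix.dotProduct_mulVec u (A i) η, dotProduct_comm η ((A i).mulVec u),
      dotProduct_add (b i) u η, hc]
    ring
  -- linear part
  have hlin_eq : ∀ z, cvec ⬝ᵥ etabar z = ∑ k, cvec k * etabar z k := fun z => rfl
  have hlinint : Integrable (fun z => cvec ⬝ᵥ etabar z) μ := by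
    simp only [hlin_eq]
    exact integrable_finset_sum _ fun k _ => (hηint k).const_mul _
  have hlinzero : ∫ z, cvec ⬝ᵥ etabar z ∂μ = 0 := by
    simp only [hlin_eq]
    rw [integral_finset_sum _ fun k _ => (hηint k).const_mul _]
    simp [MeasureTheory.integral_const_mul, hηzero]
  -- quadratic part
  set quad : (Fin N → ℝ) → ℝ := fun z =>
    (1/2) * (etabar z ⬝ᵥ (A i).mulVec (etabar z)) with hquad
  have hquad_eq : ∀ z, quad z
      = (1/2) * ∑ k, ∑ l, etabar z k * (A i k l * etabar z l) := by
    intro z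
    simp [hquad, dotProduct, Matrix.mulVec, Finset.mul_sum]
  have hquadbd : ∀ z, |quad z| ≤ (1/2) * ((∑ k, ∑ l, |A i k l|) * (B * amax) ^ 2) := by
    intro z
    rw [hquad_eq z, abs_mul, abs_of_pos (by norm_num : (0:ℝ) < 1/2)]
    refine mul_le_mul_of_nonneg_left ?_ (by norm_num)
    refine (Finset.abs_sum_le_sum_abs _ _).trans ?_
    rw [Finset.sum_mul]
    refine Finset.sum_le_sum fun k _ => ?_
    refine (Finset.abs_sum_le_sum_abs _ _).trans ?_
    rw [Finset.sum_mul]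
    refine Finset.sum_le_sum fun l _ => ?_
    rw [abs_mul, abs_mul]
    have h1 : |etabar z k| * |etabar z l| ≤ (B * amax) * (B * amax) :=
      mul_le_mul (hηbd z k) (hηbd z l) (abs_nonneg _) (by positivity)
    calc |etabar z k| * (|A i k l| * |etabar z l|)
        = |A i k l| * (|etabar z k| * |etabar z l|) := by ring
      _ ≤ |A i k l| * ((B * amax) * (B * amax)) :=
          mul_le_mul_of_nonneg_left h1 (abs_nonneg _)
      _ = |A i k l| * (B * amax) ^ 2 := by ring
  have hquadmeas : Measurable quad := by
    have : quad = fun z => (1/2) * ∑ k, ∑ l, etabar z k * (A i k l * etabar z l) :=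
      funext hquad_eq
    rw [this]
    exact (Finset.measurable_sum _ fun k _ =>
      Finset.measurable_sum _ fun l _ =>
        (hηmeas k).mul ((hηmeas l).const_mul _)).const_mul _
  have hquadint : Integrable quad μ := integrable_of_bdd hquadmeas hquadbd
  -- put it together
  have key : (∫ z, J i (u + etabar z) ∂μ) - J i u = ∫ z, quad z ∂μ := by
    have hfun : (fun z => J i (u + etabar z))
        = fun z => (J i u + cvec ⬝ᵥ etabar z) + quad z := by
      funext z
      rw [expand (etabar z)]
    have h1 : Integrable (fun z => J i u + cvec ⬝ᵥ etabar z) μ :=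
      (integrable_const _).add hlinint
    rw [hfun, integral_add h1 hquadint,
      integral_add (integrable_const _) hlinint, integral_const, hlinzero]
    simp [measure_univ]
  rw [key]
  have hbound : |∫ z, quad z ∂μ| ≤ (1/2) * ((∑ k, ∑ l, |A i k l|) * (B * amax) ^ 2) := by
    have := norm_integral_le_of_norm_le_const (μ := μ) (f := quad)
      (ae_of_all μ fun z => by simpa [Real.norm_eq_abs] using hquadbd z)
    simpa [Real.norm_eq_abs, measure_univ] using this
  refine hbound.trans ?_
  have hAle : (∑ k, ∑ l, |A i k l|) ≤ SA := by
    rw [hSA]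
    exact Finset.single_le_sum (f := fun i => ∑ k, ∑ l, |A i k l|)
      (fun j _ => Finset.sum_nonneg fun _ _ => Finset.sum_nonneg fun _ _ => abs_nonneg _)
      (Finset.mem_univ i)
  calc (1/2) * ((∑ k, ∑ l, |A i k l|) * (B * amax) ^ 2)
      ≤ (1/2) * (SA * (B * amax) ^ 2) := by
        refine mul_le_mul_of_nonneg_left ?_ (by norm_num)
        exact mul_le_mul_of_nonneg_right hAle (by positivity)
    _ = (1/2) * SA * B ^ 2 * amax ^ 2 := by ring
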